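/- Let V be a type, let n ≥ 2 be a natural number, let b : ℕ → List V be injective on {1,…,n} with b(i) nonempty for every 2 ≤ i ≤ n, and let E ⊆ {1,…,n}. Then the two set equalities { b(i+1) : i odd, 1 ≤ i ≤ n−1, i ∈ E } = { b(i) : i even, 2 ≤ i ≤ n, i ∈ E } and { b(i+1) : i even, 2 ≤ i ≤ n−1, i ∈ E } = { b(i) : i odd, 3 ≤ i ≤ n, i ∈ E } both hold if and only if E = ∅ or E = {1,…,n}. -/

import Mathlib

/-!
By injectivity of `b`, each of the two set equalities compares index sets, and says that for
every `i ∈ [1, n)` of one parity, `i ∈ E ↔ i + 1 ∈ E`. Together they say this for all such `i`,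
so membership in `E` is constant along `{1, …, n}`.
-/

open Set

theorem Nat.forall_mem_iff_succ_mem_iff_eq_empty_or_eq_Icc {S : Set ℕ} {a b : ℕ}
    (hS : S ⊆ Icc a b) :
    (∀ i, a ≤ i → i < b → (i ∈ S ↔ i + 1 ∈ S)) ↔ S = ∅ ∨ S = Icc a b := by
  constructor
  · intro hstep
    have mem_iff_left : ∀ i, a ≤ i → i ≤ b → (i ∈ S ↔ a ∈ S) := by
      intro i hai
      induction i, hai using Nat.le_induction with
      | base => simp
      | succ i hai ih => intro hib; rw [← hstep i hai hib, ih (by omega)]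
    by_cases ha : a ∈ S
    · exact Or.inr <| hS.antisymm fun i ⟨hai, hib⟩ => (mem_iff_left i hai hib).2 ha
    · exact Or.inl <| eq_empty_of_forall_notMem fun i hi =>
        ha ((mem_iff_left i (hS hi).1 (hS hi).2).1 hi)
  · rintro (rfl | rfl) i hai hib
    · simp
    · simp only [mem_Icc]; omega

theorem Nat.image_succ_eq_iff_forall_mem_iff_succ_mem {p q : ℕ → Prop}
    (hpq : ∀ i, q (i + 1) ↔ p i) {a : ℕ} (ha : 1 ≤ a) (n : ℕ) (E : Set ℕ) :
    (· + 1) '' {i | p i ∧ a ≤ i ∧ i ≤ n - 1 ∧ i ∈ E} = {j | q j ∧ a + 1 ≤ j ∧ j ≤ n ∧ j ∈ E} ↔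
      ∀ i, p i → a ≤ i → i < n → (i ∈ E ↔ i + 1 ∈ E) := by
  constructor
  · intro h i hp hai hin
    constructor
    · intro hi
      have : i + 1 ∈ (· + 1) '' {i | p i ∧ a ≤ i ∧ i ≤ n - 1 ∧ i ∈ E} :=
        ⟨i, ⟨hp, hai, by omega, hi⟩, rfl⟩
      rw [h] at this
      exact this.2.2.2
    · intro hi
      have : i + 1 ∈ {j | q j ∧ a + 1 ≤ j ∧ j ≤ n ∧ j ∈ E} :=
        ⟨(hpq i).2 hp, by omega, hin, hi⟩
      rw [← h] at this
      obtain ⟨i', hi', hii'⟩ := this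
      rw [← Nat.succ_injective hii']
      exact hi'.2.2.2
  · intro h
    ext j
    simp only [mem_image, mem_ofPred_eq]
    constructor
    · rintro ⟨i, ⟨hp, hai, hin, hi⟩, rfl⟩
      exact ⟨(hpq i).2 hp, by omega, by omega, (h i hp hai (by omega)).1 hi⟩
    · rintro ⟨hq, haj, hjn, hj⟩
      obtain ⟨i, rfl⟩ : ∃ i, j = i + 1 := ⟨j - 1, by omega⟩
      have hp := (hpq i).1 hq
      exact ⟨i, ⟨hp, by omega, by omega, (h i hp (by omega) (by omega)).2 hj⟩, rfl⟩

theorem Set.InjOn.setOf_apply_succ_eq_setOf_apply_iff {α : Type*} {n : ℕ} {b : ℕ → α}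
    (hb : InjOn b (Icc 1 n)) {p q : ℕ → Prop} (hpq : ∀ i, q (i + 1) ↔ p i) {a : ℕ} (ha : 1 ≤ a)
    (E : Set ℕ) :
    {v | ∃ i, p i ∧ a ≤ i ∧ i ≤ n - 1 ∧ i ∈ E ∧ v = b (i + 1)} =
        {v | ∃ j, q j ∧ a + 1 ≤ j ∧ j ≤ n ∧ j ∈ E ∧ v = b j} ↔
      ∀ i, p i → a ≤ i → i < n → (i ∈ E ↔ i + 1 ∈ E) := by
  have hsucc : {v | ∃ i, p i ∧ a ≤ i ∧ i ≤ n - 1 ∧ i ∈ E ∧ v = b (i + 1)} =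
      b '' ((· + 1) '' {i | p i ∧ a ≤ i ∧ i ≤ n - 1 ∧ i ∈ E}) := by
    ext; simp [eq_comm, and_assoc]
  have hself : {v | ∃ j, q j ∧ a + 1 ≤ j ∧ j ≤ n ∧ j ∈ E ∧ v = b j} =
      b '' {j | q j ∧ a + 1 ≤ j ∧ j ≤ n ∧ j ∈ E} := by
    ext; simp [eq_comm, and_assoc]
  rw [hsucc, hself, hb.image_eq_image_iff (by grind) (by grind)]
  exact Nat.image_succ_eq_iff_forall_mem_iff_succ_mem hpq ha n E

theorem stmt6_general {V : Type*} (n : ℕ) (b : ℕ → List V)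
    (hb : Set.InjOn b (Set.Icc 1 n))
    (E : Set ℕ) (hE : E ⊆ Set.Icc 1 n) :
    (({v : List V | ∃ i, Odd i ∧ 1 ≤ i ∧ i ≤ n - 1 ∧ i ∈ E ∧ v = b (i + 1)} =
        {v : List V | ∃ i, Even i ∧ 2 ≤ i ∧ i ≤ n ∧ i ∈ E ∧ v = b i}) ∧
      ({v : List V | ∃ i, Even i ∧ 2 ≤ i ∧ i ≤ n - 1 ∧ i ∈ E ∧ v = b (i + 1)} =
        {v : List V | ∃ i, Odd i ∧ 3 ≤ i ∧ i ≤ n ∧ i ∈ E ∧ v = b i})) ↔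
      (E = ∅ ∨ E = Set.Icc 1 n) := by
  have hodd_succ (i : ℕ) : Even (i + 1) ↔ Odd i := Nat.even_add_one.trans Nat.not_even_iff_odd
  have heven_succ (i : ℕ) : Odd (i + 1) ↔ Even i := Nat.odd_add_one.trans Nat.not_odd_iff_even
  refine (and_congr (hb.setOf_apply_succ_eq_setOf_apply_iff hodd_succ le_rfl E)
    (hb.setOf_apply_succ_eq_setOf_apply_iff heven_succ one_le_two E)).trans ?_
  rw [← Nat.forall_mem_iff_succ_mem_iff_eq_empty_or_eq_Icc hE]
  constructor
  · rintro ⟨hodd, heven⟩ i hi hin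
    rcases Nat.even_or_odd i with h | h
    · exact heven i h (by grind) hin
    · exact hodd i h hi hin
  · exact fun h => ⟨fun i _ => h i, fun i _ hi => h i (by omega)⟩

/-- combinatorial core of Lemma 4 (all-or-nothing for DAG CRTs). -/
theorem stmt6 {V : Type*} (n : ℕ) (hn : 2 ≤ n) (b : ℕ → List V)
    (hb : Set.InjOn b (Set.Icc 1 n))
    (hbne : ∀ i, 2 ≤ i → i ≤ n → b i ≠ [])
    (E : Set ℕ) (hE : E ⊆ Set.Icc 1 n) :
    (({v : List V | ∃ i, Odd i ∧ 1 ≤ i ∧ i ≤ n - 1 ∧ i ∈ E ∧ v = b (i + 1)} =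
        {v : List V | ∃ i, Even i ∧ 2 ≤ i ∧ i ≤ n ∧ i ∈ E ∧ v = b i}) ∧
      ({v : List V | ∃ i, Even i ∧ 2 ≤ i ∧ i ≤ n - 1 ∧ i ∈ E ∧ v = b (i + 1)} =
        {v : List V | ∃ i, Odd i ∧ 3 ≤ i ∧ i ≤ n ∧ i ∈ E ∧ v = b i})) ↔
      (E = ∅ ∨ E = Set.Icc 1 n) :=
  stmt6_general n b hb E hE
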